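/- arXiv:2007.04315 — 3 statements merged into one kernel-verified Lean document; each statement's English description precedes it below -/
import Mathlib

section
/- Pascal's theorem: Let C be a nonsingular conic in the complex projective plane and let a, b, c, d, e, f be six distinct points on C. Then the three intersection points ab ∩ de, bc ∩ ef, cd ∩ af of pairs of opposite sides of the hexagon abcdef are collinear. -/
open Projectivization

/-- The complex projective plane. -/
abbrev ProjPlane := Projectivization ℂ (Fin 3 → ℂ)

/-- Three points of the projective plane are collinear if their representative
vectors are linearly dependent. -/
def Collin (x y z : ProjPlane) : Prop :=
  ¬ LinearIndependent ℂ ![x.rep, y.rep, z.rep]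

/-- The line through two points, as a linear subspace of `ℂ³`. -/
noncomputable def line (x y : ProjPlane) : Submodule ℂ (Fin 3 → ℂ) :=
  Submodule.span ℂ {x.rep, y.rep}

/-!
Over an algebraically closed field of characteristic not two all nondegenerate ternary quadratic
forms are equivalent, so after a linear change of coordinates the conic is `XZ = Y²`, whose points
are the multiples of `(s², st, t²)`. Points and lines are dual through the cross product: the line
through `u` and `v` is `{w | w ⬝ (u × v) = 0}`, and two distinct lines with normals `n`, `n'` meet
in `n × n'`. Collinearity of the three meets is the vanishing of their triple product, which for
the parametrised points is a polynomial identity in the parameters.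
-/

open Matrix Submodule

section CrossProduct

variable {K : Type*} [Field K]

theorem linearIndependent_vec3_iff_dotProduct_cross_ne_zero {u v w : Fin 3 → K} :
    LinearIndependent K ![u, v, w] ↔ u ⬝ᵥ v ⨯₃ w ≠ 0 := by
  rw [triple_product_eq_det, ← isUnit_iff_ne_zero]
  exact (linearIndependent_rows_iff_isUnit (A := of ![u, v, w])).trans (isUnit_iff_isUnit_det _)

theorem dotProduct_cross_eq_zero_of_mem_span_pair {u v w : Fin 3 → K}
    (hw : w ∈ span K {u, v}) : w ⬝ᵥ u ⨯₃ v = 0 := by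
  obtain ⟨a, b, rfl⟩ := mem_span_pair.mp hw
  simp only [add_dotProduct, smul_dotProduct, dot_self_cross, dot_cross_self, smul_zero, add_zero]

theorem mem_span_pair_iff_dotProduct_cross_eq_zero {u v w : Fin 3 → K}
    (huv : LinearIndependent K ![u, v]) : w ∈ span K {u, v} ↔ w ⬝ᵥ u ⨯₃ v = 0 := by
  refine ⟨dotProduct_cross_eq_zero_of_mem_span_pair, fun hw ↦ by_contra fun hmem ↦ ?_⟩
  have : LinearIndependent K ![w, u, v] :=
    linearIndependent_finCons.mpr ⟨huv, by rwa [range_cons_cons_empty]⟩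
  exact linearIndependent_vec3_iff_dotProduct_cross_ne_zero.mp this hw

theorem linearIndependent_cross_pair_of_span_ne {u v u' v' : Fin 3 → K}
    (h : LinearIndependent K ![u, v]) (h' : LinearIndependent K ![u', v'])
    (hne : span K {u, v} ≠ span K {u', v'}) :
    LinearIndependent K ![u ⨯₃ v, u' ⨯₃ v'] := by
  rw [LinearIndependent.pair_iff' (crossProduct_ne_zero_iff_linearIndependent.mpr h)]
  intro a ha
  have ha0 : a ≠ 0 := by
    rintro rfl
    exact crossProduct_ne_zero_iff_linearIndependent.mpr h' (by simpa using ha.symm)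
  refine hne (ext fun w ↦ ?_)
  rw [mem_span_pair_iff_dotProduct_cross_eq_zero h, mem_span_pair_iff_dotProduct_cross_eq_zero h',
    ← ha, dotProduct_smul, smul_eq_mul, mul_eq_zero, or_iff_right ha0]

theorem exists_eq_smul_cross_cross_of_mem_span_pair {u v u' v' w : Fin 3 → K}
    (h : LinearIndependent K ![u, v]) (h' : LinearIndependent K ![u', v'])
    (hne : span K {u, v} ≠ span K {u', v'})
    (hw : w ∈ span K {u, v}) (hw' : w ∈ span K {u', v'}) :
    ∃ c : K, w = c • (u ⨯₃ v ⨯₃ (u' ⨯₃ v')) := by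
  have hm : u ⨯₃ v ⨯₃ (u' ⨯₃ v') ≠ 0 := crossProduct_ne_zero_iff_linearIndependent.mpr
    (linearIndependent_cross_pair_of_span_ne h h' hne)
  -- `w` is orthogonal to both normals, so both terms of the expansion of the cross product vanish
  have hdep : ¬ LinearIndependent K ![u ⨯₃ v ⨯₃ (u' ⨯₃ v'), w] := by
    rw [← crossProduct_ne_zero_iff_linearIndependent, cross_cross_eq_smul_sub_smul, not_not,
      dotProduct_comm, dotProduct_cross_eq_zero_of_mem_span_pair hw, dotProduct_comm,
      dotProduct_cross_eq_zero_of_mem_span_pair hw', zero_smul, zero_smul, sub_zero]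
  rw [LinearIndependent.pair_iff' hm] at hdep
  push Not at hdep
  obtain ⟨c, hc⟩ := hdep
  exact ⟨c, hc.symm⟩

end CrossProduct

section Conic

variable {R K : Type*} [CommRing R] [Field K]

def stdConic : QuadraticForm R (Fin 3 → R) := QuadraticMap.proj 0 2 - QuadraticMap.proj 1 1

theorem stdConic_apply (v : Fin 3 → R) : stdConic v = v 0 * v 2 - v 1 * v 1 := rfl

def conicParam (s t : R) : Fin 3 → R := ![s ^ 2, s * t, t ^ 2]

theorem exists_eq_smul_conicParam {v : Fin 3 → K} (hv : stdConic v = 0) :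
    ∃ α s t : K, v = α • conicParam s t := by
  rw [stdConic_apply, sub_eq_zero] at hv
  by_cases h0 : v 0 = 0
  · have h1 : v 1 = 0 := mul_self_eq_zero.mp (by rw [← hv, h0, zero_mul])
    refine ⟨v 2, 0, 1, ?_⟩
    ext i; fin_cases i <;> simp [conicParam, h0, h1]
  · refine ⟨v 0, 1, v 1 / v 0, ?_⟩
    ext i; fin_cases i <;>
      simp only [Fin.zero_eta, Fin.mk_one, Fin.reduceFinMk, Fin.isValue, conicParam, one_pow,
        one_mul, mul_one, Pi.smul_apply, smul_eq_mul, cons_val_zero, cons_val_one, cons_val] <;>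
      field_simp
    linear_combination hv

theorem triple_product_pascal_conicParam_eq_zero (s₁ t₁ s₂ t₂ s₃ t₃ s₄ t₄ s₅ t₅ s₆ t₆ : R) :
    let P₁ := conicParam s₁ t₁; let P₂ := conicParam s₂ t₂; let P₃ := conicParam s₃ t₃
    let P₄ := conicParam s₄ t₄; let P₅ := conicParam s₅ t₅; let P₆ := conicParam s₆ t₆
    P₁ ⨯₃ P₂ ⨯₃ (P₄ ⨯₃ P₅) ⬝ᵥ (P₂ ⨯₃ P₃ ⨯₃ (P₅ ⨯₃ P₆)) ⨯₃ (P₃ ⨯₃ P₄ ⨯₃ (P₁ ⨯₃ P₆)) = 0 := by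
  simp only [conicParam, cross_apply, vec3_dotProduct, cons_val_zero, cons_val_one, cons_val_two,
    head_cons, tail_cons]
  ring

theorem not_linearIndependent_pascal_stdConic {A B C D E F X Y Z : Fin 3 → K}
    (hA : stdConic A = 0) (hB : stdConic B = 0) (hC : stdConic C = 0)
    (hD : stdConic D = 0) (hE : stdConic E = 0) (hF : stdConic F = 0)
    (hAB : LinearIndependent K ![A, B]) (hBC : LinearIndependent K ![B, C])
    (hCD : LinearIndependent K ![C, D]) (hDE : LinearIndependent K ![D, E])
    (hEF : LinearIndependent K ![E, F]) (hAF : LinearIndependent K ![A, F])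
    (hABDE : span K {A, B} ≠ span K {D, E}) (hBCEF : span K {B, C} ≠ span K {E, F})
    (hCDAF : span K {C, D} ≠ span K {A, F})
    (hXAB : X ∈ span K {A, B}) (hXDE : X ∈ span K {D, E})
    (hYBC : Y ∈ span K {B, C}) (hYEF : Y ∈ span K {E, F})
    (hZCD : Z ∈ span K {C, D}) (hZAF : Z ∈ span K {A, F}) :
    ¬ LinearIndependent K ![X, Y, Z] := by
  obtain ⟨x, hX⟩ := exists_eq_smul_cross_cross_of_mem_span_pair hAB hDE hABDE hXAB hXDE
  obtain ⟨y, hY⟩ := exists_eq_smul_cross_cross_of_mem_span_pair hBC hEF hBCEF hYBC hYEF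
  obtain ⟨z, hZ⟩ := exists_eq_smul_cross_cross_of_mem_span_pair hCD hAF hCDAF hZCD hZAF
  obtain ⟨a, s₁, t₁, rfl⟩ := exists_eq_smul_conicParam hA
  obtain ⟨b, s₂, t₂, rfl⟩ := exists_eq_smul_conicParam hB
  obtain ⟨c, s₃, t₃, rfl⟩ := exists_eq_smul_conicParam hC
  obtain ⟨d, s₄, t₄, rfl⟩ := exists_eq_smul_conicParam hD
  obtain ⟨e, s₅, t₅, rfl⟩ := exists_eq_smul_conicParam hE
  obtain ⟨f, s₆, t₆, rfl⟩ := exists_eq_smul_conicParam hF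
  rw [linearIndependent_vec3_iff_dotProduct_cross_ne_zero, not_not, hX, hY, hZ]
  simp only [map_smul, LinearMap.smul_apply, smul_dotProduct, dotProduct_smul,
    triple_product_pascal_conicParam_eq_zero, smul_zero]

end Conic

section NormalForm

variable {K V : Type*} [Field K] [AddCommGroup V] [Module K V]

theorem separatingLeft_associated_of_polarBilin [Invertible (2 : K)] {Q : QuadraticForm K V}
    (hQ : (QuadraticMap.polarBilin Q).SeparatingLeft) :
    (QuadraticMap.associated Q).SeparatingLeft := fun x hx ↦
  hQ x fun y ↦ by
    rw [← QuadraticMap.two_nsmul_associated K, LinearMap.smul_apply, LinearMap.smul_apply]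
    exact smul_eq_zero_of_right 2 (hx y)

theorem separatingLeft_polarBilin_stdConic [NeZero (2 : K)] :
    (QuadraticMap.polarBilin (stdConic (R := K))).SeparatingLeft := by
  intro x hx
  have h (y : Fin 3 → K) : x 0 * y 2 + x 2 * y 0 - 2 * x 1 * y 1 = 0 := by
    rw [← hx y, QuadraticMap.polarBilin_apply_apply, QuadraticMap.polar, stdConic_apply,
      stdConic_apply, stdConic_apply]
    simp only [Pi.add_apply]
    ring
  have h0 := h ![0, 0, 1]
  have h1 := h ![0, 1, 0]
  have h2 := h ![1, 0, 0]
  simp only [Fin.isValue, cons_val, cons_val_zero, cons_val_one, mul_zero, mul_one, add_zero,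
    zero_add, sub_zero, zero_sub, neg_eq_zero, mul_eq_zero] at h0 h1 h2
  ext i; fin_cases i <;> simp [h0, h1.resolve_left two_ne_zero, h2]

theorem equivalent_stdConic [IsAlgClosed K] [Invertible (2 : K)] (Q : QuadraticForm K (Fin 3 → K))
    (hQ : (QuadraticMap.polarBilin Q).SeparatingLeft) : Q.Equivalent stdConic :=
  QuadraticForm.equivalent_of_isAlgClosed Q stdConic (separatingLeft_associated_of_polarBilin hQ)
    (separatingLeft_associated_of_polarBilin separatingLeft_polarBilin_stdConic)

end NormalForm

open scoped LinearAlgebra.Projectivization in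
theorem linearIndependent_map_rep_pair {K V W : Type*} [Field K] [AddCommGroup V] [Module K V]
    [AddCommGroup W] [Module K W] {f : V →ₗ[K] W} (hf : Function.Injective f)
    {p q : ℙ K V} (h : p ≠ q) : LinearIndependent K ![f p.rep, f q.rep] := by
  have h' := (independent_iff.mp ((independent_pair_iff_ne p q).mpr h)).map'
    f (LinearMap.ker_eq_bot.mpr hf)
  rwa [show f ∘ Projectivization.rep ∘ ![p, q] = ![f p.rep, f q.rep] by
    ext i; fin_cases i <;> rfl] at h'

/-- **Pascal's theorem.**  Let `Q` be a nonsingular (nondegenerate) quadratic form on `ℂ³`,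
whose zero locus in the projective plane is a nonsingular conic.  Let `a b c d e f` be six
distinct points on this conic, in general position in the sense that the three pairs of
opposite sides `ab, de`, `bc, ef`, `cd, af` consist of distinct lines (so that the three
intersection points are well defined).  If `x, y, z` are the intersection points
`ab ∩ de`, `bc ∩ ef`, `cd ∩ af`, then `x, y, z` are collinear. -/
theorem pascal_theorem
    (Q : QuadraticForm ℂ (Fin 3 → ℂ))
    (hQ : (QuadraticMap.polarBilin Q).Nondegenerate)
    (a b c d e f : ProjPlane)
    (hdist : Function.Injective ![a, b, c, d, e, f])
    (ha : Q a.rep = 0) (hb : Q b.rep = 0) (hc : Q c.rep = 0)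
    (hd : Q d.rep = 0) (he : Q e.rep = 0) (hf : Q f.rep = 0)
    (hab_de : line a b ≠ line d e)
    (hbc_ef : line b c ≠ line e f)
    (hcd_af : line c d ≠ line a f)
    (x y z : ProjPlane)
    (hx1 : x.rep ∈ line a b) (hx2 : x.rep ∈ line d e)
    (hy1 : y.rep ∈ line b c) (hy2 : y.rep ∈ line e f)
    (hz1 : z.rep ∈ line c d) (hz2 : z.rep ∈ line a f) :
    Collin x y z := by
  obtain ⟨E⟩ := equivalent_stdConic Q hQ.1
  let φ : (Fin 3 → ℂ) →ₗ[ℂ] (Fin 3 → ℂ) := E.toLinearEquiv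
  have hφ : Function.Injective φ := E.injective
  have hconic {w : Fin 3 → ℂ} (hw : Q w = 0) : stdConic (φ w) = 0 := (E.map_app w).trans hw
  have hind (i j : Fin 6) (hij : i ≠ j := by decide) :=
    linearIndependent_map_rep_pair hφ (hdist.ne hij)
  have hspan (p q : ProjPlane) : span ℂ {φ p.rep, φ q.rep} = (line p q).map φ := by
    rw [line, ← Set.image_pair, span_image]
  have hmem {w : Fin 3 → ℂ} {p q : ProjPlane} (hw : w ∈ line p q) :
      φ w ∈ span ℂ {φ p.rep, φ q.rep} := hspan p q ▸ mem_map_of_mem hw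
  have hne {p q p' q' : ProjPlane} (h : line p q ≠ line p' q') :
      span ℂ {φ p.rep, φ q.rep} ≠ span ℂ {φ p'.rep, φ q'.rep} := by
    rw [hspan, hspan]
    exact fun h' ↦ h (map_injective_of_injective hφ h')
  intro hxyz
  refine not_linearIndependent_pascal_stdConic (hconic ha) (hconic hb) (hconic hc) (hconic hd)
    (hconic he) (hconic hf) (hind 0 1) (hind 1 2) (hind 2 3) (hind 3 4) (hind 4 5) (hind 0 5)
    (hne hab_de) (hne hbc_ef) (hne hcd_af) (hmem hx1) (hmem hx2) (hmem hy1) (hmem hy2)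
    (hmem hz1) (hmem hz2) ?_
  have h' := hxyz.map' φ (LinearMap.ker_eq_bot.mpr hφ)
  rwa [show φ ∘ ![x.rep, y.rep, z.rep] = ![φ x.rep, φ y.rep, φ z.rep] by
    ext i; fin_cases i <;> rfl] at h'
end

section
/- The even-indexed terms of the Veronese sequence converge to 1 + 1/√3, and the odd-indexed terms converge to 1 − 1/√3. -/
/-!
Two steps of the recursion compose to the Möbius map `f x = 2 - x / (3x - 1) = (5x - 2) / (3x - 1)`
with fixed points `a, b = 1 ± 1/√3`, and `(f x - a) / (f x - b) = r (x - a) / (x - b)` with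
`r = (2 - √3)²`. As `(α₀ - a) / (α₀ - b) = -1`, this gives the closed form
`√3 α₂ₘ (1 + rᵐ) = (√3 + 1) + (√3 - 1) rᵐ`, so `α₂ₘ → a` because `0 < r < 1`, and
`α₂ₘ₊₁ = 2 - α₂ₘ₊₂ → 2 - a = b`.
-/

open Filter Topology

/-- The Veronese sequence as a sequence of real numbers: `α 0 = 1`,
`α (i+1) = 2 - α i` for `i` odd, and `α (i+1) = α i / (3 α i - 1)` for `i` even. -/
noncomputable def veronese : ℕ → ℝ
  | 0 => 1
  | (i + 1) => if Odd i then 2 - veronese i else veronese i / (3 * veronese i - 1)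

open Real

lemma one_lt_sqrt_three : 1 < √3 := by
  rw [lt_sqrt zero_le_one]; norm_num

lemma sqrt_three_lt_two : √3 < 2 := by
  rw [sqrt_lt' two_pos]; norm_num

lemma sq_two_sub_sqrt_three_pos : 0 < (2 - √3) ^ 2 :=
  pow_pos (sub_pos.2 sqrt_three_lt_two) 2

lemma sq_two_sub_sqrt_three_lt_one : (2 - √3) ^ 2 < 1 :=
  pow_lt_one₀ (sub_nonneg.2 sqrt_three_lt_two.le) (by linarith [one_lt_sqrt_three]) two_ne_zero

lemma veronese_two_mul_add_one (m : ℕ) :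
    veronese (2 * m + 1) = veronese (2 * m) / (3 * veronese (2 * m) - 1) := by
  simp [veronese]

lemma veronese_two_mul_add_two (m : ℕ) : veronese (2 * m + 2) = 2 - veronese (2 * m + 1) := by
  simp [veronese]

lemma sqrt_three_mul_veronese_two_mul (m : ℕ) :
    √3 * veronese (2 * m) * (1 + ((2 - √3) ^ 2) ^ m) =
      (√3 + 1) + (√3 - 1) * ((2 - √3) ^ 2) ^ m := by
  have hs : √3 ^ 2 = 3 := sq_sqrt zero_le_three
  induction m with
  | zero => simp [veronese]; ring
  | succ m ih =>
    rw [Nat.mul_succ, veronese_two_mul_add_two, veronese_two_mul_add_one, pow_succ]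
    have ht := pow_pos sq_two_sub_sqrt_three_pos m
    generalize veronese (2 * m) = x at ih ⊢
    generalize ((2 - √3) ^ 2) ^ m = t at ih ht ⊢
    have hden : 3 * x - 1 ≠ 0 := by
      have h3 : 3 / 2 < √3 := by nlinarith [sqrt_nonneg 3]
      have key : √3 * (1 + t) * (3 * x - 1) = (2 * √3 + 3) + (2 * √3 - 3) * t := by
        linear_combination 3 * ih
      have : 0 < √3 * (1 + t) * (3 * x - 1) := by rw [key]; nlinarith
      exact (pos_of_mul_pos_right this (by positivity)).ne'
    rw [sub_div' hden, mul_div_assoc', div_mul_eq_mul_div, div_eq_iff hden]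
    -- modulo `√3 ^ 2 = 3`, the goal is `2 - √3` times `ih`
    linear_combination (2 - √3) * ih + (x - 1 + (2 * √3 - 4) * x * t + (2 - √3) * t) * hs

lemma tendsto_veronese_two_mul :
    Tendsto (fun m => veronese (2 * m)) atTop (𝓝 (1 + 1 / √3)) := by
  have hs : 0 < √3 := sqrt_pos.2 three_pos
  have hr : Tendsto (fun m => ((2 - √3) ^ 2) ^ m) atTop (𝓝 0) :=
    tendsto_pow_atTop_nhds_zero_of_lt_one sq_two_sub_sqrt_three_pos.le sq_two_sub_sqrt_three_lt_one
  have hlim := ((tendsto_const_nhds (x := √3 + 1)).add (hr.const_mul (√3 - 1))).div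
    ((hr.const_add 1).const_mul √3) (by positivity)
  rw [show 1 + 1 / √3 = (√3 + 1 + (√3 - 1) * 0) / (√3 * (1 + 0)) by field_simp; ring]
  refine hlim.congr fun m => ?_
  have := pow_pos sq_two_sub_sqrt_three_pos m
  simp only [Pi.div_apply]
  rw [div_eq_iff (by positivity), ← sqrt_three_mul_veronese_two_mul]
  ring

/-- The even-indexed terms of the Veronese sequence converge to `1 + 1/√3`,
and the odd-indexed terms converge to `1 - 1/√3`. -/
theorem veronese_limits :
    Tendsto (fun m => veronese (2 * m)) atTop (𝓝 (1 + 1 / Real.sqrt 3)) ∧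
    Tendsto (fun m => veronese (2 * m + 1)) atTop (𝓝 (1 - 1 / Real.sqrt 3)) := by
  refine ⟨tendsto_veronese_two_mul, ?_⟩
  have hodd : ∀ m, veronese (2 * m + 1) = 2 - veronese (2 * (m + 1)) := fun m => by
    rw [Nat.mul_succ, veronese_two_mul_add_two, sub_sub_cancel]
  have hshift := (tendsto_veronese_two_mul.comp (tendsto_add_atTop_nat 1)).const_sub 2
  rw [show (2 : ℝ) - (1 + 1 / √3) = 1 - 1 / √3 by ring] at hshift
  exact hshift.congr fun m => (hodd m).symm
end

section
/- Under an outer automorphism of S₆, the image of every 6-cycle has cycle type 1+2+3 (a fixed point, a transposition, and a 3-cycle), and the images of a 6-cycle h and of its inverse h⁻¹ have the same fixed point and the same 2-cycle part. -/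
open Equiv

open Equiv.Perm

/-- An automorphism of a group is inner if it is conjugation by some element. -/
def IsInner {G : Type*} [Group G] (ζ : MulAut G) : Prop :=
  ∃ g : G, ∀ x : G, ζ x = g * x * g⁻¹

lemma D2 : ∀ i j : Fin 6, i ≠ 0 → j ≠ 0 → i ≠ j →
    swap 0 i * swap 0 j ≠ swap 0 j * swap 0 i := by decide

lemma D3 : ∀ i j k : Fin 6, i ≠ 0 → j ≠ 0 → k ≠ 0 → i ≠ j → i ≠ k → j ≠ k →
    (swap 0 i * swap 0 j * swap 0 k) ^ 2 ≠ 1 := by decide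

lemma D5 : ∀ x y d : Fin 6, (swap x y * swap x d * swap y d) ^ 2 = 1 := by decide

lemma commute_of_nonshare {a b c d : Fin 6} (hac : a ≠ c) (had : a ≠ d) (hbc : b ≠ c)
    (hbd : b ≠ d) : swap a b * swap c d = swap c d * swap a b := by
  have hdisj : (swap a b).Disjoint (swap c d) := by
    intro x
    by_cases hxa : x = a
    · subst hxa; right; exact swap_apply_of_ne_of_ne hac had
    by_cases hxb : x = b
    · subst hxb; right; exact swap_apply_of_ne_of_ne hbc hbd
    · left; exact swap_apply_of_ne_of_ne hxa hxb
  exact hdisj.commute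

lemma share {a b c d : Fin 6} (h : swap a b * swap c d ≠ swap c d * swap a b) :
    a = c ∨ a = d ∨ b = c ∨ b = d := by
  by_contra hn
  push_neg at hn
  exact h (commute_of_nonshare hn.1 hn.2.1 hn.2.2.1 hn.2.2.2)

lemma pair_norm {s1 s2 : Perm (Fin 6)} (h1 : s1.IsSwap) (h2 : s2.IsSwap)
    (h12 : s1 * s2 ≠ s2 * s1) :
    ∃ u v w, u ≠ v ∧ u ≠ w ∧ v ≠ w ∧ s1 = swap u v ∧ s2 = swap u w := by
  obtain ⟨x, y, hxy, rfl⟩ := h1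
  obtain ⟨c, d, hcd, rfl⟩ := h2
  have hne : swap x y ≠ swap c d := fun heq => h12 (by rw [heq])
  rcases share h12 with rfl | rfl | rfl | rfl
  · refine ⟨x, y, d, hxy, hcd, ?_, rfl, rfl⟩
    rintro rfl; exact hne rfl
  · refine ⟨x, y, c, hxy, Ne.symm hcd, ?_, rfl, swap_comm c x⟩
    rintro rfl; exact hne (swap_comm x y)
  · refine ⟨y, x, d, Ne.symm hxy, hcd, ?_, swap_comm x y, rfl⟩
    rintro rfl; exact hne (swap_comm x y)
  · refine ⟨y, x, c, Ne.symm hxy, Ne.symm hcd, ?_, swap_comm x y, swap_comm c y⟩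
    rintro rfl; exact hne rfl

lemma isSwap_moved {s : Perm (Fin 6)} (hs : s.IsSwap) {x : Fin 6} (hx : s x ≠ x) :
    s = swap x (s x) := by
  obtain ⟨a, b, hab, rfl⟩ := hs
  rcases (swap_apply_ne_self_iff.mp hx).2 with rfl | rfl
  · rw [swap_apply_left]
  · rw [swap_apply_right, swap_comm]

lemma moved_uniq {s1 s2 : Perm (Fin 6)} (h1 : s1.IsSwap) (h2 : s2.IsSwap)
    (h12 : s1 * s2 ≠ s2 * s1) {x y : Fin 6}
    (hx1 : s1 x ≠ x) (hx2 : s2 x ≠ x) (hy1 : s1 y ≠ y) (hy2 : s2 y ≠ y) : x = y := by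
  obtain ⟨u, v, w, huv, huw, hvw, rfl, rfl⟩ := pair_norm h1 h2 h12
  have hx1' := (swap_apply_ne_self_iff.mp hx1).2
  have hx2' := (swap_apply_ne_self_iff.mp hx2).2
  have hy1' := (swap_apply_ne_self_iff.mp hy1).2
  have hy2' := (swap_apply_ne_self_iff.mp hy2).2
  have hxu : x = u := by
    rcases hx1' with rfl | rfl
    · rfl
    · rcases hx2' with h | h
      · exact h
      · exact absurd h hvw
  have hyu : y = u := by
    rcases hy1' with rfl | rfl
    · rfl
    · rcases hy2' with h | h
      · exact h
      · exact absurd h hvw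
  rw [hxu, hyu]

lemma triple_common {s1 s2 s3 : Perm (Fin 6)} (h1 : s1.IsSwap) (h2 : s2.IsSwap)
    (h3 : s3.IsSwap) (h12 : s1 * s2 ≠ s2 * s1) (h13 : s1 * s3 ≠ s3 * s1)
    (h23 : s2 * s3 ≠ s3 * s2) (hsq : (s1 * s2 * s3) ^ 2 ≠ 1) :
    ∃ x, s1 x ≠ x ∧ s2 x ≠ x ∧ s3 x ≠ x := by
  obtain ⟨u, v, w, huv, huw, hvw, rfl, rfl⟩ := pair_norm h1 h2 h12
  obtain ⟨e, f, hef, rfl⟩ := h3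
  by_cases hu : u = e ∨ u = f
  · refine ⟨u, ?_, ?_, ?_⟩
    · rw [swap_apply_left]; exact Ne.symm huv
    · rw [swap_apply_left]; exact Ne.symm huw
    · rcases hu with rfl | rfl
      · rw [swap_apply_left]; exact Ne.symm hef
      · rw [swap_apply_right]; exact hef
  · push_neg at hu
    exfalso
    have h13' : v = e ∨ v = f := by
      rcases share h13 with h | h | h | h
      · exact absurd h hu.1
      · exact absurd h hu.2
      · exact Or.inl h
      · exact Or.inr h
    have h23' : w = e ∨ w = f := by
      rcases share h23 with h | h | h | h
      · exact absurd h hu.1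
      · exact absurd h hu.2
      · exact Or.inl h
      · exact Or.inr h
    have hvw' : swap e f = swap v w := by
      rcases h13' with rfl | rfl <;> rcases h23' with rfl | rfl
      · exact absurd rfl hvw
      · rfl
      · exact swap_comm w v
      · exact absurd rfl hvw
    rw [hvw'] at hsq
    exact hsq (D5 u v w)

lemma inner_of_swaps (ζ : MulAut (Perm (Fin 6)))
    (hs : ∀ x y : Fin 6, x ≠ y → (ζ (swap x y)).IsSwap) : IsInner ζ := by
  classical
  set T : Fin 6 → Perm (Fin 6) := fun i => ζ (swap 0 i) with hT
  have hTsw : ∀ i : Fin 6, i ≠ 0 → (T i).IsSwap := fun i hi => hs 0 i (Ne.symm hi)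
  have hTnc : ∀ i j : Fin 6, i ≠ 0 → j ≠ 0 → i ≠ j → T i * T j ≠ T j * T i := by
    intro i j hi hj hij hC
    refine D2 i j hi hj hij (ζ.injective ?_)
    simpa [map_mul] using hC
  have hTsq : ∀ i j k : Fin 6, i ≠ 0 → j ≠ 0 → k ≠ 0 → i ≠ j → i ≠ k → j ≠ k →
      (T i * T j * T k) ^ 2 ≠ 1 := by
    intro i j k hi hj hk hij hik hjk hC
    refine D3 i j k hi hj hk hij hik hjk (ζ.injective ?_)
    rw [map_pow, map_mul, map_mul, map_one]
    exact hC
  obtain ⟨a, ha1, ha2, ha3⟩ := triple_common (hTsw 1 (by decide)) (hTsw 2 (by decide))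
    (hTsw 3 (by decide)) (hTnc 1 2 (by decide) (by decide) (by decide))
    (hTnc 1 3 (by decide) (by decide) (by decide))
    (hTnc 2 3 (by decide) (by decide) (by decide))
    (hTsq 1 2 3 (by decide) (by decide) (by decide) (by decide) (by decide) (by decide))
  have haT : ∀ i : Fin 6, i ≠ 0 → T i a ≠ a := by
    intro i hi
    by_cases h1 : i = 1
    · subst h1; exact ha1
    by_cases h2 : i = 2
    · subst h2; exact ha2
    obtain ⟨x, hx1, hx2, hxi⟩ := triple_common (hTsw 1 (by decide)) (hTsw 2 (by decide))
      (hTsw i hi) (hTnc 1 2 (by decide) (by decide) (by decide))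
      (hTnc 1 i (by decide) hi (Ne.symm h1)) (hTnc 2 i (by decide) hi (Ne.symm h2))
      (hTsq 1 2 i (by decide) (by decide) hi (by decide) (Ne.symm h1) (Ne.symm h2))
    have hxa : x = a := moved_uniq (hTsw 1 (by decide)) (hTsw 2 (by decide))
      (hTnc 1 2 (by decide) (by decide) (by decide)) hx1 hx2 ha1 ha2
    rw [← hxa]; exact hxi
  set gf : Fin 6 → Fin 6 := fun i => if i = 0 then a else T i a with hgf
  have hinj : Function.Injective gf := by
    intro i j hij
    by_cases hi : i = 0 <;> by_cases hj : j = 0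
    · rw [hi, hj]
    · exfalso
      simp only [hgf, hi, hj, if_pos, if_neg, if_true] at hij
      exact haT j hj hij.symm
    · exfalso
      simp only [hgf, hi, hj, if_pos, if_neg, if_true] at hij
      exact haT i hi hij
    · simp only [hgf, hi, hj, if_false] at hij
      have hTij : T i = T j := by
        rw [isSwap_moved (hTsw i hi) (haT i hi), isSwap_moved (hTsw j hj) (haT j hj), hij]
      have : swap (0 : Fin 6) i = swap 0 j := ζ.injective hTij
      have := congrArg (fun p : Perm (Fin 6) => p 0) this
      simpa [swap_apply_left] using this
  obtain ⟨g, hg⟩ : ∃ g : Perm (Fin 6), ∀ x, g x = gf x :=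
    ⟨Equiv.ofBijective gf (Finite.injective_iff_bijective.mp hinj), fun x => rfl⟩
  have hg0 : g 0 = a := by rw [hg]; simp [hgf]
  have hgi : ∀ i : Fin 6, i ≠ 0 → g i = T i a := by
    intro i hi; rw [hg]; simp [hgf, hi]
  have key0 : ∀ i : Fin 6, i ≠ 0 → ζ (swap 0 i) = g * swap 0 i * g⁻¹ := by
    intro i hi
    rw [← swap_apply_apply, hg0, hgi i hi]
    exact isSwap_moved (hTsw i hi) (haT i hi)
  have key : ∀ x y : Fin 6, x ≠ y → ζ (swap x y) = g * swap x y * g⁻¹ := by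
    intro x y hxy
    by_cases hx : x = 0
    · subst hx; exact key0 y (Ne.symm hxy)
    by_cases hy : y = 0
    · subst hy; rw [swap_comm]; exact key0 x hx
    have hconj : swap x y = swap 0 x * swap 0 y * (swap 0 x)⁻¹ := by
      rw [← swap_apply_apply, swap_apply_left, swap_apply_of_ne_of_ne hy (Ne.symm hxy)]
    rw [hconj, map_mul, map_mul, map_inv, key0 x hx, key0 y hy]
    group
  refine ⟨g, fun f => ?_⟩
  refine Equiv.Perm.swap_induction_on f (by simp) ?_
  intro f x y hxy ih
  rw [map_mul, key x y hxy, ih]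
  group

lemma sign_mulAut (ζ : MulAut (Perm (Fin 6))) (x : Perm (Fin 6)) :
    Perm.sign (ζ x) = Perm.sign x := by
  have key : ∀ (η : MulAut (Perm (Fin 6))) (y : Perm (Fin 6)),
      Perm.sign y = 1 → Perm.sign (η y) = 1 := by
    have main : ∀ (η : MulAut (Perm (Fin 6))) (y : Perm (Fin 6)),
        y ∈ Subgroup.closure {σ : Perm (Fin 6) | σ.IsThreeCycle} →
        Perm.sign (η y) = 1 := by
      intro η y hy'
      induction hy' using Subgroup.closure_induction with
      | mem z hz =>
          have hz3 : z.IsThreeCycle := hz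
          have ho : z ^ 3 = 1 := by
            rw [← hz3.orderOf]; exact pow_orderOf_eq_one z
          have hz4 : (z ^ 2) ^ 2 = z := by
            rw [← pow_mul]
            rw [show (2 * 2 : ℕ) = 3 + 1 from rfl, pow_succ, ho, one_mul]
          calc Perm.sign (η z) = Perm.sign ((η (z ^ 2)) ^ 2) := by rw [← map_pow, hz4]
            _ = (Perm.sign (η (z ^ 2))) ^ 2 := by rw [map_pow]
            _ = 1 := by rcases Int.units_eq_one_or (Perm.sign (η (z ^ 2))) with h | h <;>
                  rw [h] <;> decide
      | one => simp
      | mul u v hu hv ihu ihv => rw [map_mul, map_mul, ihu, ihv, one_mul]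
      | inv u hu ihu => rw [map_inv, map_inv, ihu, inv_one]
    intro η y hy
    refine main η y ?_
    rw [Equiv.Perm.closure_three_cycles_eq_alternating]
    exact Perm.mem_alternatingGroup.mpr hy
  rcases Int.units_eq_one_or (Perm.sign x) with hx | hx
  · rw [hx]; exact key ζ x hx
  · rcases Int.units_eq_one_or (Perm.sign (ζ x)) with hx' | hx'
    · exfalso
      have h1 := key ζ.symm (ζ x) hx'
      rw [MulEquiv.symm_apply_apply, hx] at h1
      exact absurd h1 (by decide)
    · rw [hx, hx']

-- an element of order 6 in S6 has cycle type {6} or {2,3}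
lemma cyc6 {g : Perm (Fin 6)} (hg : orderOf g = 6) :
    g.cycleType = {6} ∨ g.cycleType = ({2, 3} : Multiset ℕ) := by
  have hlcm : g.cycleType.lcm = 6 := by rw [Equiv.Perm.lcm_cycleType, hg]
  have hsum : g.cycleType.sum ≤ 6 := by
    rw [Equiv.Perm.sum_cycleType]
    calc g.support.card ≤ Fintype.card (Fin 6) := Finset.card_le_univ _
      _ = 6 := by simp
  have hmem : ∀ n ∈ g.cycleType, n = 2 ∨ n = 3 ∨ n = 6 := by
    intro n hn
    have h2 : 2 ≤ n := Equiv.Perm.two_le_of_mem_cycleType hn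
    have hdvd : n ∣ 6 := hlcm ▸ Multiset.dvd_lcm hn
    have h6 : n ≤ 6 := Nat.le_of_dvd (by norm_num) hdvd
    interval_cases n <;> revert hdvd <;> decide
  have hcard : Multiset.card g.cycleType ≤ 3 := by
    by_contra hc
    push_neg at hc
    have : 2 * Multiset.card g.cycleType ≤ g.cycleType.sum := by
      rw [mul_comm]
      exact Multiset.card_nsmul_le_sum fun x hx => Equiv.Perm.two_le_of_mem_cycleType hx
    omega
  set m := g.cycleType with hm
  interval_cases hc : (Multiset.card m)
  · rw [Multiset.card_eq_zero] at hc
    rw [hc] at hlcm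
    simp at hlcm
  · obtain ⟨a, ha⟩ := Multiset.card_eq_one.mp hc
    have ha' := hmem a (by rw [ha]; simp)
    rw [ha] at hlcm hsum ⊢
    rcases ha' with rfl | rfl | rfl <;>
      first
        | (left; rfl)
        | (exfalso; revert hlcm; decide)
  · obtain ⟨a, b, hab⟩ := Multiset.card_eq_two.mp hc
    have ha' := hmem a (by rw [hab]; simp)
    have hb' := hmem b (by rw [hab]; simp)
    rw [hab] at hlcm hsum ⊢
    right
    rcases ha' with rfl | rfl | rfl <;> rcases hb' with rfl | rfl | rfl <;>
      first
        | (exfalso; revert hlcm hsum; decide)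
        | decide
  · obtain ⟨a, b, c, habc⟩ := Multiset.card_eq_three.mp hc
    exfalso
    have ha' := hmem a (by rw [habc]; simp)
    have hb' := hmem b (by rw [habc]; simp)
    have hc' := hmem c (by rw [habc]; simp)
    rw [habc] at hlcm hsum
    rcases ha' with rfl | rfl | rfl <;> rcases hb' with rfl | rfl | rfl <;>
      rcases hc' with rfl | rfl | rfl <;> revert hlcm hsum <;> decide

lemma invol_type {g : Perm (Fin 6)} (hg : orderOf g = 2)
    (hsign : Perm.sign g = -1) :
    g.cycleType = {2} ∨ g.cycleType = ({2, 2, 2} : Multiset ℕ) := by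
  have hmem : ∀ n ∈ g.cycleType, n = 2 := by
    intro n hn
    have h2 : 2 ≤ n := Equiv.Perm.two_le_of_mem_cycleType hn
    have hdvd : n ∣ 2 := by
      rw [← hg, ← Equiv.Perm.lcm_cycleType]; exact Multiset.dvd_lcm hn
    have hle : n ≤ 2 := Nat.le_of_dvd (by norm_num) hdvd
    omega
  have hrep : g.cycleType = Multiset.replicate (Multiset.card g.cycleType) 2 :=
    Multiset.eq_replicate_card.mpr hmem
  have hsum : g.cycleType.sum ≤ 6 := by
    rw [Equiv.Perm.sum_cycleType]
    calc g.support.card ≤ Fintype.card (Fin 6) := Finset.card_le_univ _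
      _ = 6 := by simp
  set c := Multiset.card g.cycleType with hcdef
  have hsum2 : g.cycleType.sum = 2 * c := by
    rw [hrep, Multiset.sum_replicate, smul_eq_mul]; omega
  have hc3 : c ≤ 3 := by omega
  have hodd : ¬ Even (3 * c) := by
    intro hev
    have := Equiv.Perm.sign_of_cycleType g
    rw [hsum2] at this
    have h3c : 2 * c + c = 3 * c := by omega
    rw [h3c, Even.neg_one_pow hev] at this
    rw [hsign] at this
    exact absurd this (by decide)
  have hc13 : c = 1 ∨ c = 3 := by
    rcases Nat.even_or_odd c with ⟨k, hk⟩ | ⟨k, hk⟩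
    · exact absurd ⟨3 * k, by omega⟩ hodd
    · omega
  rcases hc13 with hc1 | hc1 <;> rw [hrep, hc1]
  · left; rfl
  · right; rfl

lemma cube_fpf {g : Perm (Fin 6)} (hg : g.cycleType = {6}) :
    (g ^ 3).cycleType = ({2, 2, 2} : Multiset ℕ) := by
  have hcyc : g.IsCycle := by
    rw [← Equiv.Perm.card_cycleType_eq_one, hg]; rfl
  have horder : orderOf g = 6 := by
    rw [← Equiv.Perm.lcm_cycleType, hg]; decide
  have hsupp : g.support.card = 6 := by
    rw [← Equiv.Perm.sum_cycleType, hg]; rfl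
  have hfix : ∀ x : Fin 6, g x ≠ x := by
    intro x
    have : g.support = Finset.univ := by
      apply Finset.eq_univ_of_card; rw [hsupp]; simp
    have hx : x ∈ g.support := this ▸ Finset.mem_univ x
    exact Equiv.Perm.mem_support.mp hx
  have hfix3 : ∀ x : Fin 6, (g ^ 3) x ≠ x := by
    intro x hx
    have key : ∀ n : ℕ, (g ^ n) x = x ∨ (g ^ n) x = g x ∨ (g ^ n) x = (g ^ 2) x := by
      intro n
      induction n with
      | zero => left; simp
      | succ n ih =>
          rw [pow_succ', Equiv.Perm.mul_apply]
          rcases ih with h | h | h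
          · rw [h]; right; left; rfl
          · rw [h]; right; right; rw [pow_two, Equiv.Perm.mul_apply]
          · rw [h]
            left
            rw [show (g : Perm (Fin 6)) ^ 3 = g * g ^ 2 by group, Equiv.Perm.mul_apply] at hx
            exact hx
    have huniv : (Finset.univ : Finset (Fin 6)) ⊆ {x, g x, (g ^ 2) x} := by
      intro y _
      obtain ⟨i, hi⟩ := hcyc.exists_pow_eq (hfix x) (hfix y)
      rcases key i with h | h | h <;> rw [hi] at h <;> simp [h]
    have h6 : (6 : ℕ) ≤ ({x, g x, (g ^ 2) x} : Finset (Fin 6)).card := by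
      calc (6 : ℕ) = (Finset.univ : Finset (Fin 6)).card := by simp
        _ ≤ _ := Finset.card_le_card huniv
    have h3 : ({x, g x, (g ^ 2) x} : Finset (Fin 6)).card ≤ 3 := by
      apply le_trans (Finset.card_insert_le _ _)
      have := Finset.card_insert_le (g x) ({(g ^ 2) x} : Finset (Fin 6))
      simp at this ⊢
      omega
    omega
  have ho3 : orderOf (g ^ 3) = 2 := by
    rw [orderOf_pow, horder]; decide
  have hmem : ∀ n ∈ (g ^ 3).cycleType, n = 2 := by
    intro n hn
    have h2 : 2 ≤ n := Equiv.Perm.two_le_of_mem_cycleType hn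
    have hdvd : n ∣ 2 := by
      rw [← ho3, ← Equiv.Perm.lcm_cycleType]; exact Multiset.dvd_lcm hn
    have hle : n ≤ 2 := Nat.le_of_dvd (by norm_num) hdvd
    omega
  have hsupp3 : (g ^ 3).support = Finset.univ :=
    Finset.eq_univ_iff_forall.mpr fun x => Equiv.Perm.mem_support.mpr (hfix3 x)
  have hsum3 : (g ^ 3).cycleType.sum = 6 := by
    rw [Equiv.Perm.sum_cycleType, hsupp3]; simp
  have hrep : (g ^ 3).cycleType = Multiset.replicate (Multiset.card (g ^ 3).cycleType) 2 :=
    Multiset.eq_replicate_card.mpr hmem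
  have hcard : Multiset.card (g ^ 3).cycleType = 3 := by
    have := hsum3
    rw [hrep, Multiset.sum_replicate, smul_eq_mul] at this
    omega
  rw [hrep, hcard]
  rfl

lemma swap_cycleType {x y : Fin 6} (hxy : x ≠ y) :
    (swap x y).cycleType = ({2} : Multiset ℕ) := by
  have hc : (swap x y).IsCycle := Equiv.Perm.isCycle_swap hxy
  rw [hc.cycleType, Equiv.Perm.support_swap hxy]
  rw [Finset.card_insert_of_notMem (by simp [hxy]), Finset.card_singleton]

lemma isSwap_of_cycleType {g : Perm (Fin 6)} (hg : g.cycleType = ({2} : Multiset ℕ)) :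
    g.IsSwap :=
  Equiv.Perm.card_support_eq_two.mp (by rw [← Equiv.Perm.sum_cycleType, hg]; rfl)

-- decomposition of a {2,3} permutation
lemma decomp23 {g : Perm (Fin 6)} (hg : g.cycleType = ({2, 3} : Multiset ℕ)) :
    ∃ σ τ : Perm (Fin 6), σ.IsSwap ∧ τ.cycleType = {3} ∧ σ.Disjoint τ ∧ g = σ * τ := by
  have hcardf : g.cycleFactorsFinset.card = 2 := by
    have h1 : Multiset.card g.cycleType = 2 := by rw [hg]; rfl
    rwa [Equiv.Perm.cycleType_def, Multiset.card_map] at h1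
  obtain ⟨c, d, hcd, hfac⟩ := Finset.card_eq_two.mp hcardf
  have hcm : c ∈ g.cycleFactorsFinset := by rw [hfac]; simp
  have hdm : d ∈ g.cycleFactorsFinset := by rw [hfac]; simp
  have hcc : c.IsCycle := (Equiv.Perm.mem_cycleFactorsFinset_iff.mp hcm).1
  have hdc : d.IsCycle := (Equiv.Perm.mem_cycleFactorsFinset_iff.mp hdm).1
  have hdisj : c.Disjoint d :=
    Equiv.Perm.cycleFactorsFinset_pairwise_disjoint g (by exact_mod_cast hcm)
      (by exact_mod_cast hdm) hcd
  have hval : g.cycleFactorsFinset.1 = c ::ₘ d ::ₘ 0 := by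
    rw [hfac]
    rw [Finset.insert_val_of_notMem (by simp [hcd])]
    rfl
  have hct : g.cycleType = {c.support.card, d.support.card} := by
    rw [Equiv.Perm.cycleType_def, hval]
    rfl
  have hprod : c * d = g := by
    have h5 : ∀ (s : Finset (Perm (Fin 6)))
        (comm : (s : Set (Perm (Fin 6))).Pairwise Commute), s = {c, d} →
        s.noncommProd id comm = c * d := by
      rintro s comm rfl
      rw [Finset.noncommProd_insert_of_notMem _ _ _ _ (by simp [hcd]),
        Finset.noncommProd_singleton]
      rfl
    have h2 := Equiv.Perm.cycleFactorsFinset_noncommProd g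
    rw [h5 _ _ hfac] at h2
    exact h2
  have hmemc : c.support.card = 2 ∨ c.support.card = 3 := by
    have : c.support.card ∈ ({2, 3} : Multiset ℕ) := by
      rw [← hg, hct]; simp
    simpa using this
  have hsum5 : c.support.card + d.support.card = 5 := by
    have h3 : g.cycleType.sum = 5 := by rw [hg]; rfl
    rw [hct] at h3
    simpa using h3
  rcases hmemc with h2 | h3
  · refine ⟨c, d, Equiv.Perm.card_support_eq_two.mp h2, ?_, hdisj, hprod.symm⟩
    rw [hdc.cycleType]
    have : d.support.card = 3 := by omega
    rw [this]
  · refine ⟨d, c, Equiv.Perm.card_support_eq_two.mp (by omega), ?_, hdisj.symm, ?_⟩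
    · rw [hcc.cycleType, h3]
    · rw [← hprod]
      exact hdisj.commute.eq

/-- Under an outer automorphism `ζ` of `S₆`, every 6-cycle `h` is sent to a permutation
of cycle type `1+2+3`, and the images of `h` and of `h⁻¹` can be written as `σ * τ` and
`σ * τ⁻¹` with `σ` a transposition and `τ` a disjoint 3-cycle: in particular `ζ h` and
`ζ h⁻¹` have the same fixed point and the same 2-cycle part. -/
theorem s6_outer_image_of_six_cycle
    (ζ : MulAut (Perm (Fin 6))) (hζ : ¬ IsInner ζ)
    (h : Perm (Fin 6)) (hh : h.cycleType = {6}) :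
    (ζ h).cycleType = ({2, 3} : Multiset ℕ) ∧
    ∃ σ τ : Perm (Fin 6), σ.IsSwap ∧ τ.cycleType = {3} ∧ σ.Disjoint τ ∧
      ζ h = σ * τ ∧ ζ h⁻¹ = σ * τ⁻¹ := by
  have horder : orderOf h = 6 := by
    rw [← Equiv.Perm.lcm_cycleType, hh]; decide
  have horderζ : orderOf (ζ h) = 6 := by
    have heq : orderOf (ζ h) = orderOf h := by
      simpa using orderOf_injective ζ.toMonoidHom ζ.injective h
    rw [heq, horder]
  have hmain : (ζ h).cycleType = ({2, 3} : Multiset ℕ) := by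
    rcases cyc6 horderζ with hcase | hcase
    · exfalso
      have h01 : (0 : Fin 6) ≠ 1 := by decide
      set s : Perm (Fin 6) := swap 0 1 with hsdef
      have hso : orderOf s = 2 := by
        rw [← Equiv.Perm.lcm_cycleType, swap_cycleType h01]; decide
      have hsζo : orderOf (ζ s) = 2 := by
        have heq : orderOf (ζ s) = orderOf s := by
          simpa using orderOf_injective ζ.toMonoidHom ζ.injective s
        rw [heq, hso]
      have hsζsign : Perm.sign (ζ s) = -1 := by
        rw [sign_mulAut]
        exact Equiv.Perm.sign_swap h01
      rcases invol_type hsζo hsζsign with hst | hst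
      · apply hζ
        apply inner_of_swaps
        intro x y hxy
        have hconj : IsConj s (swap x y) :=
          Equiv.Perm.isConj_iff_cycleType_eq.mpr
            (by rw [swap_cycleType h01, swap_cycleType hxy])
        have hconj2 : IsConj (ζ s) (ζ (swap x y)) := by
          have := ζ.toMonoidHom.map_isConj hconj
          simpa using this
        have := Equiv.Perm.isConj_iff_cycleType_eq.mp hconj2
        exact isSwap_of_cycleType (by rw [← this, hst])
      · have h1 : (h ^ 3).cycleType = ({2, 2, 2} : Multiset ℕ) := cube_fpf hh
        have h2 : ((ζ h) ^ 3).cycleType = ({2, 2, 2} : Multiset ℕ) := cube_fpf hcase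
        have h3 : IsConj (ζ s) (ζ (h ^ 3)) := by
          rw [map_pow]
          exact Equiv.Perm.isConj_iff_cycleType_eq.mpr (by rw [hst, h2])
        have h4 : IsConj s (h ^ 3) := by
          have := ζ.symm.toMonoidHom.map_isConj h3
          simpa using this
        have h5 := Equiv.Perm.isConj_iff_cycleType_eq.mp h4
        rw [swap_cycleType h01, h1] at h5
        exact absurd (congrArg Multiset.card h5) (by decide)
    · exact hcase
  refine ⟨hmain, ?_⟩
  obtain ⟨σ, τ, hσ, hτ, hdisj, hprod⟩ := decomp23 hmain
  refine ⟨σ, τ, hσ, hτ, hdisj, hprod, ?_⟩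
  have hinv : ζ h⁻¹ = (σ * τ)⁻¹ := by rw [map_inv, hprod]
  rw [hinv, mul_inv_rev]
  have hσinv : σ⁻¹ = σ := by
    obtain ⟨x, y, hxy, rfl⟩ := hσ
    exact Equiv.swap_inv x y
  have hcomm : τ⁻¹ * σ = σ * τ⁻¹ := (hdisj.symm.inv_left.commute).eq
  rw [hσinv, hcomm]
end
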